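/- With the frame (B_k)_{k=1}^{d²} of Lemma on frames, for every symmetric d×d matrix M = (m_{ij}), Σ_k ⟨B_k, M⟩² = ‖M‖_F² + ¼ Σ_{i≠j} (m_{ii} + m_{jj})², and the correction term satisfies 0 ≤ ¼ Σ_{i≠j}(m_{ii}+m_{jj})² ≤ (d−1)‖M‖_F². -/
import Mathlib


open Matrix

/-- Trace inner product `⟨A, B⟩ = tr(Aᵀ B)`. -/
def ip {m n : Type*} [Fintype m] [Fintype n] (A B : Matrix m n ℝ) : ℝ :=
  (Aᵀ * B).trace

/-- Frobenius norm. -/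
noncomputable def frobeniusNorm {m n : Type*} [Fintype m] [Fintype n]
    (M : Matrix m n ℝ) : ℝ :=
  Real.sqrt ((Mᵀ * M).trace)

/-- The frame matrices `B_{π(a,b)}`. -/
noncomputable def frameB (d : ℕ) (a b : Fin d) : Matrix (Fin d) (Fin d) ℝ :=
  if a = b then Matrix.vecMulVec (Pi.single a 1) (Pi.single a 1)
  else if a < b then
    (1 / 2 : ℝ) • Matrix.vecMulVec (Pi.single a 1 + Pi.single b 1) (Pi.single a 1 + Pi.single b 1)
  else
    (1 / 2 : ℝ) • Matrix.vecMulVec (Pi.single a 1 - Pi.single b 1) (Pi.single a 1 - Pi.single b 1)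

lemma ip_frameB (d : ℕ) (a b : Fin d) (M : Matrix (Fin d) (Fin d) ℝ) :
    ip (frameB d a b) M =
      if a = b then M a a
      else if a < b then (1/2)*(M a a + M a b + M b a + M b b)
      else (1/2)*(M a a - M a b - M b a + M b b) := by
  unfold ip frameB
  split_ifs with h1 h2 <;>
  · simp [Matrix.trace, Matrix.mul_apply, Matrix.vecMulVec_apply, Pi.single_apply,
      Finset.mul_sum, mul_add, mul_sub, add_mul, sub_mul, Finset.sum_add_distrib,
      Finset.sum_sub_distrib, Finset.sum_ite_eq, Finset.sum_ite_eq', ite_and]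
    try ring

section Aux
variable (d : ℕ) (M : Matrix (Fin d) (Fin d) ℝ)

lemma diag_sum (F : Fin d × Fin d → ℝ) :
    ∑ p ∈ Finset.univ.filter (fun p : Fin d × Fin d => p.1 = p.2), F p = ∑ a, F (a, a) := by
  rw [Finset.sum_filter, Fintype.sum_prod_type]
  simp [Finset.sum_ite_eq]

lemma split_sum (F : Fin d × Fin d → ℝ) :
    ∑ p : Fin d × Fin d, F p = (∑ a, F (a, a)) +
      ∑ p ∈ Finset.univ.filter (fun p : Fin d × Fin d => p.1 ≠ p.2), F p := by
  rw [← Finset.sum_filter_add_sum_filter_not Finset.univ (fun p : Fin d × Fin d => p.1 = p.2),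
    diag_sum]

lemma frob_sq : frobeniusNorm M ^ 2 = ∑ p : Fin d × Fin d, (M p.1 p.2) ^ 2 := by
  have htr : (Mᵀ * M).trace = ∑ p : Fin d × Fin d, (M p.1 p.2) ^ 2 := by
    simp only [Matrix.trace, Matrix.diag_apply, Matrix.mul_apply, Matrix.transpose_apply,
      Fintype.sum_prod_type, ← sq]
    exact Finset.sum_comm
  rw [frobeniusNorm, Real.sq_sqrt (by rw [htr]; positivity)]
  exact htr

lemma cross_zero (hM : M.IsSymm) :
    ∑ p ∈ Finset.univ.filter (fun p : Fin d × Fin d => p.1 ≠ p.2),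
      (if p.1 < p.2 then (1:ℝ) else -1) * (M p.1 p.1 + M p.2 p.2) * (M p.1 p.2) = 0 := by
  have hsymm : ∀ i j, M j i = M i j := fun i j => hM.apply i j
  have h2 : ∑ p ∈ Finset.univ.filter (fun p : Fin d × Fin d => p.1 ≠ p.2),
      (if p.1 < p.2 then (1:ℝ) else -1) * (M p.1 p.1 + M p.2 p.2) * (M p.1 p.2)
      = ∑ p ∈ Finset.univ.filter (fun p : Fin d × Fin d => p.1 ≠ p.2),
      -((if p.1 < p.2 then (1:ℝ) else -1) * (M p.1 p.1 + M p.2 p.2) * (M p.1 p.2)) := by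
    apply Finset.sum_equiv (Equiv.prodComm (Fin d) (Fin d))
    · intro p; simp [ne_comm]
    · intro p hp
      simp only [Finset.mem_filter, Finset.mem_univ, true_and] at hp
      rcases hp.lt_or_gt with h | h <;>
        simp [Equiv.prodComm, h, h.not_gt, hsymm p.1 p.2] <;> ring
  rw [Finset.sum_neg_distrib] at h2
  linarith

end Aux

/-- Exact frame decomposition: `Σ_k ⟨B_k, M⟩² = ‖M‖_F² + ¼ Σ_{i≠j} (m_ii + m_jj)²`, with the
correction term between `0` and `(d−1)‖M‖_F²`. -/
theorem frameB_sum_sq_eq (d : ℕ) (M : Matrix (Fin d) (Fin d) ℝ) (hM : M.IsSymm) :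
    (∑ a : Fin d, ∑ b : Fin d, (ip (frameB d a b) M) ^ 2)
        = frobeniusNorm M ^ 2 +
          (1 / 4 : ℝ) * ∑ p ∈ Finset.univ.filter (fun p : Fin d × Fin d => p.1 ≠ p.2),
            (M p.1 p.1 + M p.2 p.2) ^ 2 ∧
    0 ≤ (1 / 4 : ℝ) * ∑ p ∈ Finset.univ.filter (fun p : Fin d × Fin d => p.1 ≠ p.2),
            (M p.1 p.1 + M p.2 p.2) ^ 2 ∧
    (1 / 4 : ℝ) * ∑ p ∈ Finset.univ.filter (fun p : Fin d × Fin d => p.1 ≠ p.2),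
            (M p.1 p.1 + M p.2 p.2) ^ 2 ≤ ((d : ℝ) - 1) * frobeniusNorm M ^ 2 := by
  have hsymm : ∀ i j, M j i = M i j := fun i j => hM.apply i j
  set s := Finset.univ.filter (fun p : Fin d × Fin d => p.1 ≠ p.2) with hs
  -- the main sum
  have key : ∑ a : Fin d, ∑ b : Fin d, (ip (frameB d a b) M) ^ 2
      = (∑ a, (M a a) ^ 2) +
        ∑ p ∈ s, ((1/4) * (M p.1 p.1 + M p.2 p.2) ^ 2 + (M p.1 p.2) ^ 2 +
          (if p.1 < p.2 then (1:ℝ) else -1) * (M p.1 p.1 + M p.2 p.2) * (M p.1 p.2)) := by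
    have h0 : ∑ p : Fin d × Fin d, (ip (frameB d p.1 p.2) M) ^ 2
        = (∑ a, (ip (frameB d a a) M) ^ 2) +
          ∑ p ∈ s, (ip (frameB d p.1 p.2) M) ^ 2 := split_sum d _
    rw [Fintype.sum_prod_type] at h0
    rw [h0]
    congr 1
    · exact Finset.sum_congr rfl fun a _ => by simp [ip_frameB]
    · refine Finset.sum_congr rfl fun p hp => ?_
      simp only [hs, Finset.mem_filter, Finset.mem_univ, true_and] at hp
      rcases hp.lt_or_gt with h | h <;>
        simp [ip_frameB, hp, h, h.not_gt, h.ne', hsymm p.1 p.2] <;> ring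
  have hzero := cross_zero d M hM
  have hfrob := frob_sq d M
  have hsplitF := split_sum d (fun p => (M p.1 p.2) ^ 2)
  have heq : (∑ a : Fin d, ∑ b : Fin d, (ip (frameB d a b) M) ^ 2)
      = frobeniusNorm M ^ 2 + (1 / 4 : ℝ) * ∑ p ∈ s, (M p.1 p.1 + M p.2 p.2) ^ 2 := by
    rw [key, hfrob, hsplitF]
    rw [Finset.sum_add_distrib, Finset.sum_add_distrib, hzero, Finset.mul_sum]
    ring
  refine ⟨heq, by positivity, ?_⟩
  -- the upper bound
  rcases Nat.eq_zero_or_pos d with rfl | hd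
  · simp [hs, Finset.univ_eq_empty, frobeniusNorm, Matrix.trace]
  · have hd1 : (1:ℝ) ≤ (d:ℝ) := by exact_mod_cast hd
    set D := ∑ a : Fin d, (M a a) ^ 2 with hD
    have hDle : D ≤ frobeniusNorm M ^ 2 := by
      rw [hfrob, hsplitF]
      have : 0 ≤ ∑ p ∈ s, (M p.1 p.2) ^ 2 := by positivity
      linarith
    have hTle : ∑ p ∈ s, (M p.1 p.1 + M p.2 p.2) ^ 2 ≤ 4 * ((d:ℝ) - 1) * D := by
      have h1 : ∑ p ∈ s, (M p.1 p.1 + M p.2 p.2) ^ 2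
          ≤ ∑ p ∈ s, (2 * (M p.1 p.1) ^ 2 + 2 * (M p.2 p.2) ^ 2) :=
        Finset.sum_le_sum fun p _ => by nlinarith [sq_nonneg (M p.1 p.1 - M p.2 p.2)]
      have h2 : ∑ p ∈ s, (2 * (M p.1 p.1) ^ 2 + 2 * (M p.2 p.2) ^ 2)
          = 4 * ((d:ℝ) - 1) * D := by
        have := split_sum d (fun p => 2 * (M p.1 p.1) ^ 2 + 2 * (M p.2 p.2) ^ 2)
        have huniv : ∑ p : Fin d × Fin d, (2 * (M p.1 p.1) ^ 2 + 2 * (M p.2 p.2) ^ 2)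
            = 4 * (d:ℝ) * D := by
          rw [Fintype.sum_prod_type]
          simp only [Finset.sum_add_distrib, Finset.sum_const, Finset.card_univ,
            Fintype.card_fin, nsmul_eq_mul, ← Finset.sum_mul, ← Finset.mul_sum]
          ring
        have hdiag : ∑ a : Fin d, (2 * (M a a) ^ 2 + 2 * (M a a) ^ 2) = 4 * D := by
          rw [Finset.sum_add_distrib, ← Finset.mul_sum, hD]; ring
        have h3 : ∑ p : Fin d × Fin d, (2 * (M p.1 p.1) ^ 2 + 2 * (M p.2 p.2) ^ 2)
            = (∑ a : Fin d, (2 * (M a a) ^ 2 + 2 * (M a a) ^ 2)) +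
              ∑ p ∈ s, (2 * (M p.1 p.1) ^ 2 + 2 * (M p.2 p.2) ^ 2) := split_sum d _
        linarith [h3]
      linarith
    have hmul : ((d:ℝ) - 1) * D ≤ ((d:ℝ) - 1) * frobeniusNorm M ^ 2 :=
      mul_le_mul_of_nonneg_left hDle (by linarith)
    linarith
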